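/- Let i < j < k be three indices in {1, …, n}. Then in H_n the following commutation relations hold: (jk)·x_i = q³ x_i·(jk), (jk)·y_i = q³ y_i·(jk), (jk)·x_j = q x_j·(jk), (jk)·y_j = q y_j·(jk), x_j·(ij) = q (ij)·x_j, y_j·(ij) = q (ij)·y_j, x_k·(ij) = q³ (ij)·x_k, and y_k·(ij) = q³ (ij)·y_k. -/

import Mathlib

noncomputable section

/-- Generators of the algebra `H q n`: `x i` and `y i` for `i : Fin n`. -/
inductive Gen (n : ℕ) : Type
  | x : Fin n → Gen n
  | y : Fin n → Gen n

open FreeAlgebra in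
/-- The defining relations of the braided algebra `H_n`:
`x_i y_i = q y_i x_i`, and for `i < j`:
`x_j x_i = q² x_i x_j`, `y_j y_i = q² y_i y_j`,
`x_j y_i = q y_i x_j + (q² − 1) x_i y_j`, `y_j x_i = q x_i y_j`. -/
inductive HRel (q : ℂ) (n : ℕ) :
    FreeAlgebra ℂ (Gen n) → FreeAlgebra ℂ (Gen n) → Prop
  | diag (i : Fin n) :
      HRel q n (ι ℂ (Gen.x i) * ι ℂ (Gen.y i)) (q • (ι ℂ (Gen.y i) * ι ℂ (Gen.x i)))
  | xx {i j : Fin n} (h : i < j) :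
      HRel q n (ι ℂ (Gen.x j) * ι ℂ (Gen.x i)) ((q ^ 2) • (ι ℂ (Gen.x i) * ι ℂ (Gen.x j)))
  | yy {i j : Fin n} (h : i < j) :
      HRel q n (ι ℂ (Gen.y j) * ι ℂ (Gen.y i)) ((q ^ 2) • (ι ℂ (Gen.y i) * ι ℂ (Gen.y j)))
  | xy {i j : Fin n} (h : i < j) :
      HRel q n (ι ℂ (Gen.x j) * ι ℂ (Gen.y i))
        (q • (ι ℂ (Gen.y i) * ι ℂ (Gen.x j)) + (q ^ 2 - 1) • (ι ℂ (Gen.x i) * ι ℂ (Gen.y j)))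
  | yx {i j : Fin n} (h : i < j) :
      HRel q n (ι ℂ (Gen.y j) * ι ℂ (Gen.x i)) (q • (ι ℂ (Gen.x i) * ι ℂ (Gen.y j)))

/-- The braided module algebra `H_n`. -/
abbrev H (q : ℂ) (n : ℕ) : Type := RingQuot (HRel q n)

/-- The generator `x i` of `H_n`. -/
def X (q : ℂ) {n : ℕ} (i : Fin n) : H q n :=
  RingQuot.mkAlgHom ℂ (HRel q n) (FreeAlgebra.ι ℂ (Gen.x i))

/-- The generator `y i` of `H_n`. -/
def Y (q : ℂ) {n : ℕ} (i : Fin n) : H q n :=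
  RingQuot.mkAlgHom ℂ (HRel q n) (FreeAlgebra.ι ℂ (Gen.y i))

/-- The bracket symbol `(ij) = q^{-1/2} x_i y_j - q^{1/2} y_i x_j`, where `s = q^{1/2}`. -/
def br (q s : ℂ) {n : ℕ} (i j : Fin n) : H q n :=
  s⁻¹ • (X q i * Y q j) - s • (Y q i * X q j)


section Aux
variable (q : ℂ) {n : ℕ}

lemma rel_diag (i : Fin n) : X q i * Y q i = q • (Y q i * X q i) := by
  simpa [X, Y, map_mul] using RingQuot.mkAlgHom_rel ℂ (HRel.diag (q := q) i)

lemma rel_xx {i j : Fin n} (h : i < j) :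
    X q j * X q i = (q ^ 2) • (X q i * X q j) := by
  simpa [X, map_mul] using RingQuot.mkAlgHom_rel ℂ (HRel.xx (q := q) h)

lemma rel_yy {i j : Fin n} (h : i < j) :
    Y q j * Y q i = (q ^ 2) • (Y q i * Y q j) := by
  simpa [Y, map_mul] using RingQuot.mkAlgHom_rel ℂ (HRel.yy (q := q) h)

lemma rel_xy {i j : Fin n} (h : i < j) :
    X q j * Y q i = q • (Y q i * X q j) + (q ^ 2 - 1) • (X q i * Y q j) := by
  simpa [X, Y, map_mul] using RingQuot.mkAlgHom_rel ℂ (HRel.xy (q := q) h)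

lemma rel_yx {i j : Fin n} (h : i < j) :
    Y q j * X q i = q • (X q i * Y q j) := by
  simpa [X, Y, map_mul] using RingQuot.mkAlgHom_rel ℂ (HRel.yx (q := q) h)

lemma rel_diag' (i : Fin n) (t : H q n) :
    X q i * (Y q i * t) = q • (Y q i * (X q i * t)) := by
  rw [← mul_assoc, rel_diag, smul_mul_assoc, mul_assoc]

lemma rel_xx' {i j : Fin n} (h : i < j) (t : H q n) :
    X q j * (X q i * t) = (q ^ 2) • (X q i * (X q j * t)) := by
  rw [← mul_assoc, rel_xx q h, smul_mul_assoc, mul_assoc]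

lemma rel_yy' {i j : Fin n} (h : i < j) (t : H q n) :
    Y q j * (Y q i * t) = (q ^ 2) • (Y q i * (Y q j * t)) := by
  rw [← mul_assoc, rel_yy q h, smul_mul_assoc, mul_assoc]

lemma rel_xy' {i j : Fin n} (h : i < j) (t : H q n) :
    X q j * (Y q i * t) = q • (Y q i * (X q j * t)) + (q ^ 2 - 1) • (X q i * (Y q j * t)) := by
  rw [← mul_assoc, rel_xy q h, add_mul, smul_mul_assoc, smul_mul_assoc, mul_assoc, mul_assoc]

lemma rel_yx' {i j : Fin n} (h : i < j) (t : H q n) :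
    Y q j * (X q i * t) = q • (X q i * (Y q j * t)) := by
  rw [← mul_assoc, rel_yx q h, smul_mul_assoc, mul_assoc]

end Aux

/-- **Lemma 3.1.** Commutation relations between brackets and generators. -/
theorem stmt3 (q s : ℂ) (hq : ‖q‖ = 1) (hq1 : q ≠ 1) (hq2 : q ≠ -1)
    (hq3 : q ≠ Complex.I) (hq4 : q ≠ -Complex.I) (hs : s ^ 2 = q)
    (n : ℕ) (hn : 1 ≤ n) (i j k : Fin n) (hij : i < j) (hjk : j < k) :
    br q s j k * X q i = (q ^ 3) • (X q i * br q s j k) ∧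
    br q s j k * Y q i = (q ^ 3) • (Y q i * br q s j k) ∧
    br q s j k * X q j = q • (X q j * br q s j k) ∧
    br q s j k * Y q j = q • (Y q j * br q s j k) ∧
    X q j * br q s i j = q • (br q s i j * X q j) ∧
    Y q j * br q s i j = q • (br q s i j * Y q j) ∧
    X q k * br q s i j = (q ^ 3) • (br q s i j * X q k) ∧
    Y q k * br q s i j = (q ^ 3) • (br q s i j * Y q k) := by
  have hq0 : q ≠ 0 := by
    intro h; rw [h] at hq; simp at hq
  have hs0 : s ≠ 0 := by
    intro h; rw [h] at hs; simp at hs; exact hq0 hs.symm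
  subst hs
  have hik : i < k := hij.trans hjk
  refine ⟨?_, ?_, ?_, ?_, ?_, ?_, ?_, ?_⟩ <;>
  · simp only [br, sub_mul, mul_sub, smul_sub, smul_add, mul_add, add_mul,
      smul_mul_assoc, mul_smul_comm, smul_smul, mul_assoc,
      rel_diag, rel_xx, rel_yy, rel_xy, rel_yx,
      rel_diag' _ , rel_xx' _ hij, rel_xx' _ hjk, rel_xx' _ hik,
      rel_yy' _ hij, rel_yy' _ hjk, rel_yy' _ hik,
      rel_xy' _ hij, rel_xy' _ hjk, rel_xy' _ hik,
      rel_yx' _ hij, rel_yx' _ hjk, rel_yx' _ hik,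
      rel_xx _ hij, rel_xx _ hjk, rel_xx _ hik,
      rel_yy _ hij, rel_yy _ hjk, rel_yy _ hik,
      rel_xy _ hij, rel_xy _ hjk, rel_xy _ hik,
      rel_yx _ hij, rel_yx _ hjk, rel_yx _ hik]
    match_scalars <;> field_simp <;> ring
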